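/- arXiv:2504.17504 — 6 statements merged into one kernel-verified Lean document; each statement's English description precedes it below -/
import Mathlib

section
/- Let π : X → Y be a continuous surjective map between compact metric spaces. If π is semi-open (the image of every nonempty open set has nonempty interior), then for every residual subset S of Y, the preimage π⁻¹(S) is residual in X. -/
open Set Filter

/-- Let π : X → Y be a continuous surjective map between compact metric spaces.
If π is semi-open (the image of every nonempty open set has nonempty interior),
then for every residual subset S of Y, the preimage π⁻¹(S) is residual in X. -/
theorem stmt_1 {X Y : Type*} [MetricSpace X] [CompactSpace X]
    [MetricSpace Y] [CompactSpace Y]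
    (π : X → Y) (hc : Continuous π) (hs : Function.Surjective π)
    (hsemi : ∀ U : Set X, IsOpen U → U.Nonempty → (interior (π '' U)).Nonempty)
    (S : Set Y) (hS : S ∈ residual Y) :
    π ⁻¹' S ∈ residual X := by
  rw [mem_residual_iff] at hS ⊢
  obtain ⟨T, hTo, hTd, hTc, hTs⟩ := hS
  refine ⟨(fun t => π ⁻¹' t) '' T, ?_, ?_, hTc.image _, ?_⟩
  · rintro _ ⟨t, ht, rfl⟩
    exact (hTo t ht).preimage hc
  · rintro _ ⟨t, ht, rfl⟩
    rw [dense_iff_inter_open]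
    intro U hU hUne
    obtain ⟨y, hy⟩ := hsemi U hU hUne
    obtain ⟨z, hz, hzt⟩ := (hTd t ht).inter_open_nonempty _ isOpen_interior ⟨y, hy⟩
    obtain ⟨x, hxU, rfl⟩ := interior_subset hz
    exact ⟨x, hxU, hzt⟩
  · intro x hx
    apply hTs
    intro t ht
    exact hx (π ⁻¹' t) ⟨t, ht, rfl⟩
end

section
/- Let (X,T) be a minimal system and let 𝒳, 𝒴 be subsystems of the induced hyperspace system (2^X, T). If 𝒳 and 𝒴 are disjoint as dynamical systems (their only joining is the full product 𝒳 × 𝒴), then for every A ∈ 𝒳 and B ∈ 𝒴 we have A ∩ B ≠ ∅. -/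
open Set Filter TopologicalSpace Metric

/-- A system is minimal if it has no proper nonempty closed invariant subset. -/
def IsMinimalSys {X : Type*} [TopologicalSpace X] (T : X → X) : Prop :=
  ∀ A : Set X, IsClosed A → A.Nonempty → T '' A = A → A = Set.univ

/-- `J` is a joining of the subsystems `(K,T)` and `(L,S)`: a closed `T × S`-invariant
subset of `K ×ˢ L` projecting onto `K` and onto `L`. -/
def IsJoiningOn {X Y : Type*} [TopologicalSpace X] [TopologicalSpace Y]
    (T : X → X) (S : Y → Y) (K : Set X) (L : Set Y) (J : Set (X × Y)) : Prop :=
  IsClosed J ∧ J ⊆ K ×ˢ L ∧ Prod.map T S '' J = J ∧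
    Prod.fst '' J = K ∧ Prod.snd '' J = L

/-- The subsystems `(K,T)` and `(L,S)` are disjoint: their only joining is `K ×ˢ L`. -/
def DisjointOn {X Y : Type*} [TopologicalSpace X] [TopologicalSpace Y]
    (T : X → X) (S : Y → Y) (K : Set X) (L : Set Y) : Prop :=
  ∀ J : Set (X × Y), IsJoiningOn T S K L J → J = K ×ˢ L

/-- The induced map `A ↦ T(A)` on the hyperspace of nonempty closed (= compact)
subsets of a compact metric space. -/
noncomputable def hyper {X : Type*} [TopologicalSpace X] (T : X ≃ₜ X)
    (A : NonemptyCompacts X) : NonemptyCompacts X :=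
  ⟨⟨T '' (A : Set X), A.isCompact.image T.continuous⟩, A.nonempty.image _⟩



lemma mem_limit_aux {X : Type*} [MetricSpace X] {B : ℕ → NonemptyCompacts X}
    {B₀ : NonemptyCompacts X} {x : ℕ → X} {x₀ : X}
    (hB : Tendsto B atTop (nhds B₀)) (hx : Tendsto x atTop (nhds x₀))
    (hmem : ∀ n, x n ∈ (B n : Set X)) : x₀ ∈ (B₀ : Set X) := by
  have key : ∀ n, infDist x₀ (B₀ : Set X) ≤ dist x₀ (x n) + dist (B n) B₀ := by
    intro n
    have h1 : infDist x₀ (B₀ : Set X) ≤ infDist (x n) (B₀ : Set X) + dist x₀ (x n) :=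
      infDist_le_infDist_add_dist
    have fin : EMetric.hausdorffEdist (B n : Set X) (B₀ : Set X) ≠ ⊤ :=
      hausdorffEdist_ne_top_of_nonempty_of_bounded (B n).nonempty B₀.nonempty
        (B n).isCompact.isBounded B₀.isCompact.isBounded
    have h2 : infDist (x n) (B₀ : Set X) ≤ hausdorffDist (B n : Set X) (B₀ : Set X) :=
      infDist_le_hausdorffDist_of_mem (hmem n) fin
    rw [NonemptyCompacts.dist_eq]
    linarith
  have hlim : Tendsto (fun n => dist x₀ (x n) + dist (B n) B₀) atTop (nhds 0) := by
    have h1 : Tendsto (fun n => dist x₀ (x n)) atTop (nhds 0) :=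
      tendsto_iff_dist_tendsto_zero.1 hx |>.comp tendsto_id |>.congr (by simp [dist_comm])
    have h2 : Tendsto (fun n => dist (B n) B₀) atTop (nhds 0) :=
      tendsto_iff_dist_tendsto_zero.1 hB
    simpa using h1.add h2
  have hle : infDist x₀ (B₀ : Set X) ≤ 0 := ge_of_tendsto hlim (Eventually.of_forall key)
  have : infDist x₀ (B₀ : Set X) = 0 := le_antisymm hle infDist_nonneg
  exact (B₀.isCompact.isClosed.mem_iff_infDist_zero B₀.nonempty).2 this

lemma hyper_symm_hyper {X : Type*} [TopologicalSpace X] (T : X ≃ₜ X)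
    (A : NonemptyCompacts X) : hyper T.symm (hyper T A) = A := by
  apply NonemptyCompacts.ext
  show ⇑T.symm '' (⇑T '' (A : Set X)) = A
  rw [Set.image_image]; simp

lemma hyper_hyper_symm {X : Type*} [TopologicalSpace X] (T : X ≃ₜ X)
    (A : NonemptyCompacts X) : hyper T (hyper T.symm A) = A := by
  apply NonemptyCompacts.ext
  show ⇑T '' (⇑T.symm '' (A : Set X)) = A
  rw [Set.image_image]; simp

lemma union_eq_univ {X : Type*} [MetricSpace X] [CompactSpace X] (T : X ≃ₜ X)
    (hmin : IsMinimalSys (⇑T)) (𝒴 : Set (NonemptyCompacts X))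
    (hYne : 𝒴.Nonempty) (hYcl : IsClosed 𝒴) (hYinv : hyper T '' 𝒴 = 𝒴) :
    ∀ x : X, ∃ B ∈ 𝒴, x ∈ (B : Set X) := by
  set U : Set X := ⋃ B ∈ 𝒴, (B : Set X) with hU
  have hUmem : ∀ x, x ∈ U ↔ ∃ B ∈ 𝒴, x ∈ (B : Set X) := by
    intro x; simp [hU]
  have hUcl : IsClosed U := by
    apply IsSeqClosed.isClosed
    intro x x₀ hxU hx
    choose B hB hxB using fun n => (hUmem (x n)).1 (hxU n)
    obtain ⟨B₀, hB₀, φ, hφ, hBφ⟩ := (hYcl.isCompact).tendsto_subseq hB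
    refine (hUmem x₀).2 ⟨B₀, hB₀, ?_⟩
    exact mem_limit_aux hBφ (hx.comp hφ.tendsto_atTop) (fun n => hxB (φ n))
  have hUne : U.Nonempty := by
    obtain ⟨B, hB⟩ := hYne
    obtain ⟨x, hx⟩ := B.nonempty
    exact ⟨x, (hUmem x).2 ⟨B, hB, hx⟩⟩
  have hUinv : ⇑T '' U = U := by
    ext z
    rw [hUmem z]
    constructor
    · rintro ⟨y, hy, rfl⟩
      obtain ⟨B, hB, hyB⟩ := (hUmem y).1 hy
      exact ⟨hyper T B, hYinv ▸ Set.mem_image_of_mem _ hB, Set.mem_image_of_mem _ hyB⟩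
    · rintro ⟨B, hB, hzB⟩
      rw [← hYinv] at hB
      obtain ⟨B', hB', rfl⟩ := hB
      obtain ⟨y, hy, rfl⟩ := hzB
      exact ⟨y, (hUmem y).2 ⟨B', hB', hy⟩, rfl⟩
  intro x
  have := hmin U hUcl hUne hUinv
  exact (hUmem x).1 (this ▸ Set.mem_univ x)


/-- Let (X,T) be minimal and 𝒳, 𝒴 subsystems of the induced hyperspace system (2^X,T).
If 𝒳 and 𝒴 are disjoint as dynamical systems, then every A ∈ 𝒳 meets every B ∈ 𝒴. -/
theorem stmt_4 {X : Type*} [MetricSpace X] [CompactSpace X] (T : X ≃ₜ X)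
    (hmin : IsMinimalSys (⇑T))
    (𝒳 𝒴 : Set (NonemptyCompacts X))
    (hXne : 𝒳.Nonempty) (hXcl : IsClosed 𝒳) (hXinv : hyper T '' 𝒳 = 𝒳)
    (hYne : 𝒴.Nonempty) (hYcl : IsClosed 𝒴) (hYinv : hyper T '' 𝒴 = 𝒴)
    (hdisj : DisjointOn (hyper T) (hyper T) 𝒳 𝒴) :
    ∀ A ∈ 𝒳, ∀ B ∈ 𝒴, ((A : Set X) ∩ (B : Set X)).Nonempty := by
  set J : Set (NonemptyCompacts X × NonemptyCompacts X) :=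
    {p | p.1 ∈ 𝒳 ∧ p.2 ∈ 𝒴 ∧ ((p.1 : Set X) ∩ (p.2 : Set X)).Nonempty} with hJ
  have hJcl : IsClosed J := by
    apply IsSeqClosed.isClosed
    intro p p₀ hpJ hp
    have h1 : Tendsto (fun n => (p n).1) atTop (nhds p₀.1) :=
      ((continuous_fst.tendsto p₀).comp hp)
    have h2 : Tendsto (fun n => (p n).2) atTop (nhds p₀.2) :=
      ((continuous_snd.tendsto p₀).comp hp)
    refine ⟨hXcl.mem_of_tendsto h1 (Eventually.of_forall fun n => (hpJ n).1),
      hYcl.mem_of_tendsto h2 (Eventually.of_forall fun n => (hpJ n).2.1), ?_⟩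
    choose x hxA hxB using fun n => (hpJ n).2.2
    obtain ⟨x₀, _, φ, hφ, hxφ⟩ := (isCompact_univ (X := X)).tendsto_subseq
      (fun n => Set.mem_univ (x n))
    exact ⟨x₀, mem_limit_aux (h1.comp hφ.tendsto_atTop) hxφ (fun n => hxA (φ n)),
      mem_limit_aux (h2.comp hφ.tendsto_atTop) hxφ (fun n => hxB (φ n))⟩
  have hYuniv := union_eq_univ T hmin 𝒴 hYne hYcl hYinv
  have hXuniv := union_eq_univ T hmin 𝒳 hXne hXcl hXinv
  have hjoin : IsJoiningOn (hyper T) (hyper T) 𝒳 𝒴 J := by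
    refine ⟨hJcl, fun p hp => ⟨hp.1, hp.2.1⟩, ?_, ?_, ?_⟩
    · ext p
      constructor
      · rintro ⟨⟨A, B⟩, ⟨hA, hB, ⟨x, hxA, hxB⟩⟩, rfl⟩
        exact ⟨hXinv ▸ Set.mem_image_of_mem _ hA, hYinv ▸ Set.mem_image_of_mem _ hB,
          ⟨T x, Set.mem_image_of_mem _ hxA, Set.mem_image_of_mem _ hxB⟩⟩
      · rintro ⟨hA, hB, ⟨x, hxA, hxB⟩⟩
        refine ⟨(hyper T.symm p.1, hyper T.symm p.2), ⟨?_, ?_, ?_⟩, ?_⟩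
        · rw [← hXinv] at hA; obtain ⟨A', hA', hA'eq⟩ := hA
          show hyper T.symm p.1 ∈ 𝒳
          rw [← hA'eq, hyper_symm_hyper]; exact hA'
        · rw [← hYinv] at hB; obtain ⟨B', hB', hB'eq⟩ := hB
          show hyper T.symm p.2 ∈ 𝒴
          rw [← hB'eq, hyper_symm_hyper]; exact hB'
        · exact ⟨T.symm x, Set.mem_image_of_mem _ hxA, Set.mem_image_of_mem _ hxB⟩
        · show (hyper T (hyper T.symm p.1), hyper T (hyper T.symm p.2)) = p
          rw [hyper_hyper_symm, hyper_hyper_symm]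
    · ext A
      constructor
      · rintro ⟨p, hp, rfl⟩; exact hp.1
      · intro hA
        obtain ⟨x, hx⟩ := A.nonempty
        obtain ⟨B, hB, hxB⟩ := hYuniv x
        exact ⟨(A, B), ⟨hA, hB, x, hx, hxB⟩, rfl⟩
    · ext B
      constructor
      · rintro ⟨p, hp, rfl⟩; exact hp.2.1
      · intro hB
        obtain ⟨x, hx⟩ := B.nonempty
        obtain ⟨A, hA, hxA⟩ := hXuniv x
        exact ⟨(A, B), ⟨hA, hB, x, hxA, hx⟩, rfl⟩
  have hJeq := hdisj J hjoin
  intro A hA B hB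
  have : (A, B) ∈ J := hJeq ▸ Set.mk_mem_prod hA hB
  exact this.2.2
end

section
/- Let (X,T) be a topological dynamical system and (Y,S) a minimal system. If the set Σ = {x ∈ X : the orbit closure system (cl O(x,T), T) is disjoint from (Y,S)} is dense in X, then (X,T) is disjoint from (Y,S). -/
open Set Filter TopologicalSpace

/-- The `n`-th iterate (n ∈ ℤ) of a homeomorphism. -/
def hIter {X : Type*} [TopologicalSpace X] (T : X ≃ₜ X) (n : ℤ) : X → X :=
  fun x => (T.toEquiv ^ n) x

/-- The full orbit {Tⁿ x : n ∈ ℤ} of a point. -/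
def orb {X : Type*} [TopologicalSpace X] (T : X ≃ₜ X) (x : X) : Set X :=
  Set.range fun n : ℤ => hIter T n x

/-- The orbit closure of a point. -/
def orbCl {X : Type*} [TopologicalSpace X] (T : X ≃ₜ X) (x : X) : Set X :=
  closure (orb T x)

lemma hIter_zero {X : Type*} [TopologicalSpace X] (T : X ≃ₜ X) (x : X) :
    hIter T 0 x = x := by simp [hIter]

lemma image_orb {X : Type*} [TopologicalSpace X] (T : X ≃ₜ X) (x : X) :
    T '' orb T x = orb T x := by
  ext z
  simp only [orb, Set.mem_image, Set.mem_range]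
  constructor
  · rintro ⟨w, ⟨n, rfl⟩, rfl⟩
    refine ⟨1 + n, ?_⟩
    show (T.toEquiv ^ (1 + n)) x = T (hIter T n x)
    rw [zpow_add, zpow_one, Equiv.Perm.mul_apply]
    rfl
  · rintro ⟨n, rfl⟩
    refine ⟨hIter T (n - 1) x, ⟨n - 1, rfl⟩, ?_⟩
    show T ((T.toEquiv ^ (n - 1)) x) = (T.toEquiv ^ n) x
    conv_rhs => rw [show n = 1 + (n - 1) by ring]
    rw [zpow_add, zpow_one, Equiv.Perm.mul_apply]
    rfl

lemma image_orbCl {X : Type*} [TopologicalSpace X] (T : X ≃ₜ X) (x : X) :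
    T '' orbCl T x = orbCl T x := by
  rw [orbCl, T.image_closure, image_orb]

/-- Let (Y,S) be minimal. If the set of x ∈ X whose orbit-closure subsystem is disjoint
from (Y,S) is dense in X, then (X,T) is disjoint from (Y,S). -/
theorem stmt_7 {X Y : Type*} [MetricSpace X] [CompactSpace X]
    [MetricSpace Y] [CompactSpace Y] (T : X ≃ₜ X) (S : Y ≃ₜ Y)
    (hY : IsMinimalSys (⇑S))
    (hdense : Dense {x : X | DisjointOn (⇑T) (⇑S) (orbCl T x) Set.univ}) :
    DisjointOn (⇑T) (⇑S) Set.univ Set.univ := by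
  intro J hJ
  obtain ⟨hJclosed, -, hJinv, hJfst, hJsnd⟩ := hJ
  have key : ∀ x ∈ {x : X | DisjointOn (⇑T) (⇑S) (orbCl T x) Set.univ},
      ∀ y : Y, (x, y) ∈ J := by
    intro x hx y
    set K := orbCl T x with hK
    have hKcl : IsClosed K := isClosed_closure
    have hKinv : T '' K = K := image_orbCl T x
    have hxK : x ∈ K := subset_closure ⟨0, hIter_zero T x⟩
    set Jx := J ∩ K ×ˢ (Set.univ : Set Y) with hJxdef
    have hJxclosed : IsClosed Jx := hJclosed.inter (hKcl.prod isClosed_univ)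
    have hinj : Function.Injective (Prod.map (⇑T) (⇑S)) := by
      intro a b hab
      have h1 : T a.1 = T b.1 := congrArg Prod.fst hab
      have h2 : S a.2 = S b.2 := congrArg Prod.snd hab
      exact Prod.ext (T.injective h1) (S.injective h2)
    have hprodim : Prod.map (⇑T) (⇑S) '' (K ×ˢ (Set.univ : Set Y))
        = K ×ˢ (Set.univ : Set Y) := by
      ext ⟨a, b⟩
      constructor
      · rintro ⟨⟨c, d⟩, ⟨hc, -⟩, heq⟩
        have : T c = a := congrArg Prod.fst heq
        exact ⟨this ▸ (hKinv ▸ ⟨c, hc, rfl⟩), trivial⟩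
      · rintro ⟨ha, -⟩
        obtain ⟨c, hc, hceq⟩ := hKinv ▸ ha
        exact ⟨(c, S.symm b), ⟨hc, trivial⟩, by simp [Prod.map, hceq]⟩
    have hmapped : Prod.map (⇑T) (⇑S) '' Jx = Jx := by
      rw [hJxdef, Set.image_inter hinj, hJinv, hprodim]
    have hfst : Prod.fst '' Jx = K := by
      apply subset_antisymm
      · rintro - ⟨p, ⟨-, hpK, -⟩, rfl⟩
        exact hpK
      · intro z hz
        have hzJ : z ∈ Prod.fst '' J := by rw [hJfst]; trivial
        obtain ⟨p, hp, rfl⟩ := hzJ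
        exact ⟨p, ⟨hp, hz, trivial⟩, rfl⟩
    have hBclosed : IsClosed (Prod.snd '' Jx) :=
      (hJxclosed.isCompact.image continuous_snd).isClosed
    have hBne : (Prod.snd '' Jx).Nonempty := by
      have hxJ : x ∈ Prod.fst '' J := by rw [hJfst]; trivial
      obtain ⟨p, hp, hpx⟩ := hxJ
      exact ⟨p.2, p, ⟨hp, hpx ▸ hxK, trivial⟩, rfl⟩
    have hBinv : ⇑S '' (Prod.snd '' Jx) = Prod.snd '' Jx := by
      conv_rhs => rw [← hmapped]
      rw [Set.image_image, Set.image_image]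
      rfl
    have hsnd : Prod.snd '' Jx = Set.univ := hY _ hBclosed hBne hBinv
    have hJoin : IsJoiningOn (⇑T) (⇑S) K Set.univ Jx :=
      ⟨hJxclosed, Set.inter_subset_right, hmapped, hfst, hsnd⟩
    have hJxeq : Jx = K ×ˢ Set.univ := hx Jx hJoin
    have : (x, y) ∈ Jx := by rw [hJxeq]; exact ⟨hxK, trivial⟩
    exact this.1
  rw [Set.univ_prod_univ]
  apply Set.eq_univ_of_forall
  rintro ⟨z, y⟩
  have hset : IsClosed {x : X | (x, y) ∈ J} :=
    hJclosed.preimage (continuous_id.prodMk continuous_const)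
  have hsub : closure {x : X | DisjointOn (⇑T) (⇑S) (orbCl T x) Set.univ}
      ⊆ {x : X | (x, y) ∈ J} :=
    closure_minimal (fun x hx => key x hx y) hset
  exact hsub (hdense z)
end

section
/- Let (X,T) and (Y,S) be topological dynamical systems. If (X,T) and (Y,S) are disjoint (the only joining is X×Y), then at least one of (X,T), (Y,S) is minimal. -/
open Set Filter TopologicalSpace

/-- If (X,T) and (Y,S) are disjoint, then at least one of them is minimal. -/
theorem stmt_8 {X Y : Type*} [MetricSpace X] [CompactSpace X]
    [MetricSpace Y] [CompactSpace Y] (T : X ≃ₜ X) (S : Y ≃ₜ Y)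
    (hdisj : DisjointOn (⇑T) (⇑S) Set.univ Set.univ) :
    IsMinimalSys (⇑T) ∨ IsMinimalSys (⇑S) := by
  by_contra h
  push_neg at h
  obtain ⟨hX, hY⟩ := h
  simp only [IsMinimalSys, not_forall] at hX hY
  obtain ⟨A, hAc, hAne, hAinv, hAu⟩ := hX
  obtain ⟨B, hBc, hBne, hBinv, hBu⟩ := hY
  set J : Set (X × Y) := (A ×ˢ univ) ∪ (univ ×ˢ B) with hJdef
  have hTA : ⇑T '' A = A := hAinv
  have hSB : ⇑S '' B = B := hBinv
  have himg : Prod.map (⇑T) (⇑S) '' J = J := by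
    have h1 : Prod.map (⇑T) (⇑S) '' (A ×ˢ (univ : Set Y)) = A ×ˢ univ := by
      ext ⟨p, q⟩
      constructor
      · rintro ⟨⟨a', b'⟩, ⟨ha', -⟩, heq⟩
        simp only [Prod.map, Prod.mk.injEq] at heq
        exact ⟨heq.1 ▸ hTA ▸ mem_image_of_mem _ ha', mem_univ _⟩
      · rintro ⟨hp, -⟩
        rw [← hTA] at hp
        obtain ⟨a', ha', rfl⟩ := hp
        exact ⟨(a', S.symm q), ⟨ha', mem_univ _⟩, by simp [Prod.map]⟩
    have h2 : Prod.map (⇑T) (⇑S) '' ((univ : Set X) ×ˢ B) = univ ×ˢ B := by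
      ext ⟨p, q⟩
      constructor
      · rintro ⟨⟨a', b'⟩, ⟨-, hb'⟩, heq⟩
        simp only [Prod.map, Prod.mk.injEq] at heq
        exact ⟨mem_univ _, heq.2 ▸ hSB ▸ mem_image_of_mem _ hb'⟩
      · rintro ⟨-, hq⟩
        rw [← hSB] at hq
        obtain ⟨b', hb', rfl⟩ := hq
        exact ⟨(T.symm p, b'), ⟨mem_univ _, hb'⟩, by simp [Prod.map]⟩
    rw [hJdef, image_union, h1, h2]
  obtain ⟨b, hb⟩ := hBne
  obtain ⟨a, ha⟩ := hAne
  have hfst : Prod.fst '' J = (univ : Set X) := by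
    ext x
    simp only [mem_image, mem_univ, iff_true]
    exact ⟨(x, b), Or.inr ⟨mem_univ _, hb⟩, rfl⟩
  have hsnd : Prod.snd '' J = (univ : Set Y) := by
    ext y
    simp only [mem_image, mem_univ, iff_true]
    exact ⟨(a, y), Or.inl ⟨ha, mem_univ _⟩, rfl⟩
  have hJoin : IsJoiningOn (⇑T) (⇑S) Set.univ Set.univ J :=
    ⟨(hAc.prod isClosed_univ).union (isClosed_univ.prod hBc),
      by intro p _; exact ⟨mem_univ _, mem_univ _⟩, himg, hfst, hsnd⟩
  have hJu := hdisj J hJoin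
  obtain ⟨x, hx⟩ : ∃ x, x ∉ A := by
    by_contra hc; push_neg at hc; exact hAu (eq_univ_iff_forall.2 hc)
  obtain ⟨y, hy⟩ : ∃ y, y ∉ B := by
    by_contra hc; push_neg at hc; exact hBu (eq_univ_iff_forall.2 hc)
  have : (x, y) ∈ J := by rw [hJu]; exact ⟨mem_univ _, mem_univ _⟩
  rcases this with h | h
  · exact hx h.1
  · exact hy h.2
end

section
/- Let π : (X,T) → (Y,S) be a factor map between topological dynamical systems and let (y,y') ∈ Q(Y) be a regionally proximal pair. Then there exists w ∈ Y such that (y,w) ∈ Q(Y) and (w,y') ∈ Q(Y), and moreover both pairs admit π-lifts: there exist x ∈ π⁻¹(y), u ∈ π⁻¹(w) with (x,u) ∈ Q(X), and similarly for (w,y'). -/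
open Set Filter TopologicalSpace

/-- (a,b) is a regionally proximal pair: there are sequences aᵢ → a, bᵢ → b and
integers nᵢ with dist(Tⁿⁱaᵢ, Tⁿⁱbᵢ) → 0. -/
def RPpair {X : Type*} [MetricSpace X] (T : X ≃ₜ X) (a b : X) : Prop :=
  ∃ (u v : ℕ → X) (n : ℕ → ℤ),
    Filter.Tendsto u Filter.atTop (nhds a) ∧
    Filter.Tendsto v Filter.atTop (nhds b) ∧
    Filter.Tendsto (fun i => dist (hIter T (n i) (u i)) (hIter T (n i) (v i)))
      Filter.atTop (nhds 0)

/-! Lift the sequences witnessing `(y, y') ∈ Q(Y)` to `X` and pass to a subsequence along which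
`aᵢ → x`, `bᵢ → x'`, `Tⁿⁱ aᵢ → p` and `Tⁿⁱ bᵢ → q`; since `Sⁿⁱ` brings the images close, `p` and `q`
lie in one fibre. Along a further subsequence `T⁻ⁿⁱ p → u` and `T⁻ⁿⁱ q → u'`, again in one fibre
`π⁻¹(w)`, and `(x, u)`, `(u', x')` are regionally proximal because `Tⁿⁱ` carries `aᵢ` and
`T⁻ⁿⁱ p` to points converging to the same `p` (resp. `bᵢ`, `T⁻ⁿⁱ q` to `q`). -/

open Topology Uniformity

section Iterates

variable {X Y : Type*} [TopologicalSpace X] [TopologicalSpace Y]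

lemma hIter_eq_coe_zpow (T : X ≃ₜ X) (n : ℤ) : hIter T n = ⇑(T ^ n) :=
  let toPerm : (X ≃ₜ X) →* Equiv.Perm X :=
    { toFun := Homeomorph.toEquiv, map_one' := rfl, map_mul' := fun _ _ => rfl }
  congrArg DFunLike.coe (map_zpow toPerm T n).symm

lemma hIter_hIter_neg (T : X ≃ₜ X) (n : ℤ) (x : X) : hIter T n (hIter T (-n) x) = x := by
  rw [hIter_eq_coe_zpow, hIter_eq_coe_zpow, ← Homeomorph.mul_apply, ← zpow_add,
    add_neg_cancel, zpow_zero, Homeomorph.one_apply]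

lemma Function.Semiconj.hIter {T : X ≃ₜ X} {S : Y ≃ₜ Y} {π : X → Y}
    (h : Function.Semiconj π T S) (n : ℤ) : Function.Semiconj π (hIter T n) (hIter S n) := by
  rw [hIter_eq_coe_zpow, hIter_eq_coe_zpow]
  induction n using Int.induction_on with
  | zero => exact Function.Semiconj.id_right
  | succ k ih =>
    rw [zpow_add_one, zpow_add_one]
    exact ih.comp_right h
  | pred k ih =>
    rw [zpow_sub_one, zpow_sub_one]
    exact ih.comp_right (h.inverses_right T.apply_symm_apply S.symm_apply_apply)

end Iterates

section RegionallyProximal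

variable {X Y : Type*} [MetricSpace X] [MetricSpace Y] {T : X ≃ₜ X} {S : Y ≃ₜ Y}

lemma RPpair.symm {a b : X} (h : RPpair T a b) : RPpair T b a := by
  obtain ⟨u, v, n, hu, hv, hd⟩ := h
  exact ⟨v, u, n, hv, hu, by simpa only [dist_comm] using hd⟩

lemma RPpair.map [CompactSpace X] {π : X → Y} (hπc : Continuous π)
    (hπ : Function.Semiconj π T S) {a b : X} (h : RPpair T a b) : RPpair S (π a) (π b) := by
  obtain ⟨u, v, n, hu, hv, hd⟩ := h
  refine ⟨π ∘ u, π ∘ v, n, (hπc.tendsto a).comp hu, (hπc.tendsto b).comp hv, ?_⟩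
  have hclose : Tendsto (fun i => (hIter T (n i) (u i), hIter T (n i) (v i))) atTop (𝓤 X) :=
    tendsto_uniformity_iff_dist_tendsto_zero.2 hd
  have hπclose := Tendsto.comp (CompactSpace.uniformContinuous_of_continuous hπc) hclose
  simpa only [Function.comp_apply, (hπ.hIter _).eq] using
    tendsto_uniformity_iff_dist_tendsto_zero.1 hπclose

lemma rPpair_of_tendsto_hIter {a : ℕ → X} {n : ℕ → ℤ} {x p u : X}
    (ha : Tendsto a atTop (𝓝 x)) (hp : Tendsto (fun i => hIter T (n i) (a i)) atTop (𝓝 p))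
    (hu : Tendsto (fun i => hIter T (-n i) p) atTop (𝓝 u)) : RPpair T x u := by
  refine ⟨a, fun i => hIter T (-n i) p, n, ha, hu, ?_⟩
  simpa only [hIter_hIter_neg, dist_self] using hp.dist (tendsto_const_nhds (x := p))

end RegionallyProximal

section Lifting

variable {X Y : Type*} [MetricSpace X] [CompactSpace X] [MetricSpace Y] {T : X ≃ₜ X} {S : Y ≃ₜ Y}
  {π : X → Y}

lemma RPpair.exists_lift_tendsto_hIter (hπc : Continuous π) (hπs : Function.Surjective π)
    (hπ : Function.Semiconj π T S) {y y' : Y} (h : RPpair S y y') :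
    ∃ (x x' p q : X) (a b : ℕ → X) (n : ℕ → ℤ), π x = y ∧ π x' = y' ∧ π p = π q ∧
      Tendsto a atTop (𝓝 x) ∧ Tendsto b atTop (𝓝 x') ∧
      Tendsto (fun i => hIter T (n i) (a i)) atTop (𝓝 p) ∧
      Tendsto (fun i => hIter T (n i) (b i)) atTop (𝓝 q) := by
  obtain ⟨v, v', n, hv, hv', hd⟩ := h
  choose a ha using fun i => hπs (v i)
  choose b hb using fun i => hπs (v' i)
  obtain ⟨⟨⟨x, x'⟩, p, q⟩, φ, hφ, hlim⟩ := CompactSpace.tendsto_subseq fun i =>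
    ((a i, b i), hIter T (n i) (a i), hIter T (n i) (b i))
  have hx := hlim.fst_nhds.fst_nhds
  have hx' := hlim.fst_nhds.snd_nhds
  have hp := hlim.snd_nhds.fst_nhds
  have hq := hlim.snd_nhds.snd_nhds
  have hvφ : Tendsto (fun i => π (a (φ i))) atTop (𝓝 y) := by
    simpa only [Function.comp_def, ha] using hv.comp hφ.tendsto_atTop
  have hv'φ : Tendsto (fun i => π (b (φ i))) atTop (𝓝 y') := by
    simpa only [Function.comp_def, hb] using hv'.comp hφ.tendsto_atTop
  have hπp : Tendsto (fun i => hIter S (n (φ i)) (v (φ i))) atTop (𝓝 (π p)) := by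
    simpa only [Function.comp_def, ← ha, ← (hπ.hIter _).eq] using (hπc.tendsto p).comp hp
  have hπq : Tendsto (fun i => hIter S (n (φ i)) (v' (φ i))) atTop (𝓝 (π q)) := by
    simpa only [Function.comp_def, ← hb, ← (hπ.hIter _).eq] using (hπc.tendsto q).comp hq
  refine ⟨x, x', p, q, a ∘ φ, b ∘ φ, n ∘ φ, tendsto_nhds_unique ((hπc.tendsto x).comp hx) hvφ,
    tendsto_nhds_unique ((hπc.tendsto x').comp hx') hv'φ,
    tendsto_nhds_unique (hπp.congr_dist (hd.comp hφ.tendsto_atTop)) hπq, hx, hx', hp, hq⟩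

lemma exists_rPpair_of_tendsto_hIter (hπc : Continuous π) (hπ : Function.Semiconj π T S)
    {a b : ℕ → X} {n : ℕ → ℤ} {x x' p q : X} (hpq : π p = π q)
    (ha : Tendsto a atTop (𝓝 x)) (hb : Tendsto b atTop (𝓝 x'))
    (hap : Tendsto (fun i => hIter T (n i) (a i)) atTop (𝓝 p))
    (hbq : Tendsto (fun i => hIter T (n i) (b i)) atTop (𝓝 q)) :
    ∃ u u' : X, π u = π u' ∧ RPpair T x u ∧ RPpair T u' x' := by
  obtain ⟨⟨u, u'⟩, ψ, hψ, hlim⟩ := CompactSpace.tendsto_subseq fun i =>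
    (hIter T (-n i) p, hIter T (-n i) q)
  have hu := hlim.fst_nhds
  have hu' := hlim.snd_nhds
  have hπu' : Tendsto (fun i => π (hIter T (-n (ψ i)) p)) atTop (𝓝 (π u')) := by
    simpa only [Function.comp_def, (hπ.hIter _).eq, hpq] using (hπc.tendsto u').comp hu'
  have hψ' := hψ.tendsto_atTop
  exact ⟨u, u', tendsto_nhds_unique ((hπc.tendsto u).comp hu) hπu',
    rPpair_of_tendsto_hIter (ha.comp hψ') (hap.comp hψ') hu,
    (rPpair_of_tendsto_hIter (hb.comp hψ') (hbq.comp hψ') hu').symm⟩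

end Lifting

theorem stmt_14_general {X Y : Type*} [MetricSpace X] [CompactSpace X]
    [MetricSpace Y] (T : X ≃ₜ X) (S : Y ≃ₜ Y)
    (π : X → Y) (hπc : Continuous π) (hπs : Function.Surjective π)
    (hπ : ∀ x, π (T x) = S (π x))
    (y y' : Y) (h : RPpair S y y') :
    ∃ w : Y, RPpair S y w ∧ RPpair S w y' ∧
      (∃ x u : X, π x = y ∧ π u = w ∧ RPpair T x u) ∧
      (∃ x u : X, π x = w ∧ π u = y' ∧ RPpair T x u) := by
  obtain ⟨x, x', p, q, a, b, n, rfl, rfl, hpq, ha, hb, hap, hbq⟩ :=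
    h.exists_lift_tendsto_hIter hπc hπs hπ
  obtain ⟨u, u', hu, hxu, hux⟩ := exists_rPpair_of_tendsto_hIter hπc hπ hpq ha hb hap hbq
  refine ⟨π u, hxu.map hπc hπ, ?_, ⟨x, u, rfl, rfl, hxu⟩, ⟨u', x', hu.symm, rfl, hux⟩⟩
  simpa only [hu] using hux.map hπc hπ

/-- Let π : (X,T) → (Y,S) be a factor map and (y,y') a regionally proximal pair in Y.
Then there is w ∈ Y with (y,w), (w,y') ∈ Q(Y) such that both pairs admit π-lifts. -/
theorem stmt_14 {X Y : Type*} [MetricSpace X] [CompactSpace X]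
    [MetricSpace Y] [CompactSpace Y] (T : X ≃ₜ X) (S : Y ≃ₜ Y)
    (π : X → Y) (hπc : Continuous π) (hπs : Function.Surjective π)
    (hπ : ∀ x, π (T x) = S (π x))
    (y y' : Y) (h : RPpair S y y') :
    ∃ w : Y, RPpair S y w ∧ RPpair S w y' ∧
      (∃ x u : X, π x = y ∧ π u = w ∧ RPpair T x u) ∧
      (∃ x u : X, π x = w ∧ π u = y' ∧ RPpair T x u) :=
  stmt_14_general T S π hπc hπs hπ y y' h
end

section
/- Let (X,T) be a transitive system such that there exist minimal subsets M_i (i ∈ ℕ) of X whose union is dense in X, and such that for every transitive point x of X and every y ∈ ⋃ᵢ Mᵢ, the pair (x,y) is proximal. Then (X,T) is disjoint from every minimal system. -/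
open Set Filter TopologicalSpace

/-- `M` is a minimal subset (minimal subsystem) of (X,T). -/
def IsMinimalSubset {X : Type*} [TopologicalSpace X] (T : X ≃ₜ X) (M : Set X) : Prop :=
  IsClosed M ∧ M.Nonempty ∧ ⇑T '' M = M ∧
    ∀ B : Set X, IsClosed B → B.Nonempty → B ⊆ M → ⇑T '' B = B → B = M

set_option linter.unusedSectionVars false

section Aux

variable {Z : Type*} [TopologicalSpace Z]

lemma perm_pow_apply (f : Equiv.Perm Z) (k : ℕ) (z : Z) : (f ^ k) z = (⇑f)^[k] z := by
  induction k generalizing z with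
  | zero => rfl
  | succ k ih =>
    rw [pow_succ, Equiv.Perm.mul_apply, Function.iterate_succ_apply, ih]

lemma hIter_natCast (e : Z ≃ₜ Z) (k : ℕ) (z : Z) : hIter e (k : ℤ) z = (⇑e)^[k] z := by
  unfold hIter
  rw [zpow_natCast, perm_pow_apply]
  rfl

lemma hIter_negSucc (e : Z ≃ₜ Z) (k : ℕ) (z : Z) :
    hIter e (Int.negSucc k) z = (⇑e.symm)^[k + 1] z := by
  unfold hIter
  rw [zpow_negSucc, ← inv_pow, perm_pow_apply]
  rfl

lemma hIter_continuous (e : Z ≃ₜ Z) (n : ℤ) : Continuous (hIter e n) := by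
  cases n with
  | ofNat k =>
    have h : hIter e (Int.ofNat k) = (⇑e)^[k] := by
      funext z; exact hIter_natCast e k z
    rw [h]; exact e.continuous.iterate k
  | negSucc k =>
    have h : hIter e (Int.negSucc k) = (⇑e.symm)^[k + 1] := by
      funext z; exact hIter_negSucc e k z
    rw [h]; exact e.symm.continuous.iterate (k + 1)

lemma hIter_add_apply (e : Z ≃ₜ Z) (m n : ℤ) (z : Z) :
    hIter e (m + n) z = hIter e m (hIter e n z) := by
  unfold hIter
  rw [zpow_add, Equiv.Perm.mul_apply]

lemma hIter_zero_s16 (e : Z ≃ₜ Z) (z : Z) : hIter e 0 z = z := by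
  unfold hIter; rw [zpow_zero]; rfl

lemma hIter_one (e : Z ≃ₜ Z) (z : Z) : hIter e 1 z = e z := by
  unfold hIter; rw [zpow_one]; rfl

lemma iterate_mem_of_mem {A : Set Z} {f : Z → Z} (hf : ∀ z ∈ A, f z ∈ A) (k : ℕ) :
    ∀ z ∈ A, f^[k] z ∈ A := by
  induction k with
  | zero => intro z hz; exact hz
  | succ k ih =>
    intro z hz
    rw [Function.iterate_succ_apply]
    exact ih _ (hf z hz)

lemma hIter_mem (e : Z ≃ₜ Z) {A : Set Z} (hA : ⇑e '' A = A) (n : ℤ) {z : Z} (hz : z ∈ A) :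
    hIter e n z ∈ A := by
  have hfwd : ∀ w ∈ A, e w ∈ A := fun w hw => hA ▸ mem_image_of_mem _ hw
  have hbwd : ∀ w ∈ A, e.symm w ∈ A := by
    intro w hw
    rw [← hA] at hw
    obtain ⟨u, hu, rfl⟩ := hw
    simpa using hu
  cases n with
  | ofNat k =>
    rw [show Int.ofNat k = (k : ℤ) from rfl, hIter_natCast]
    exact iterate_mem_of_mem hfwd k z hz
  | negSucc k =>
    rw [hIter_negSucc]
    exact iterate_mem_of_mem hbwd (k + 1) z hz

lemma mem_orb_self (e : Z ≃ₜ Z) (z : Z) : z ∈ orb e z := ⟨0, hIter_zero_s16 e z⟩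

lemma image_orb_s16 (e : Z ≃ₜ Z) (z : Z) : ⇑e '' orb e z = orb e z := by
  ext w
  constructor
  · rintro ⟨u, ⟨n, rfl⟩, rfl⟩
    refine ⟨1 + n, ?_⟩
    show hIter e (1 + n) z = e (hIter e n z)
    rw [hIter_add_apply, hIter_one]
  · rintro ⟨n, rfl⟩
    refine ⟨hIter e (n - 1) z, ⟨n - 1, rfl⟩, ?_⟩
    show e (hIter e (n - 1) z) = hIter e n z
    rw [← hIter_one e (hIter e (n - 1) z), ← hIter_add_apply]
    norm_num

lemma image_orbCl_s16 (e : Z ≃ₜ Z) (z : Z) : ⇑e '' orbCl e z = orbCl e z := by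
  unfold orbCl
  rw [e.image_closure, image_orb_s16]

lemma orbCl_subset (e : Z ≃ₜ Z) {A : Set Z} (hcl : IsClosed A) (hA : ⇑e '' A = A)
    {z : Z} (hz : z ∈ A) : orbCl e z ⊆ A := by
  apply hcl.closure_subset_iff.mpr
  rintro w ⟨n, rfl⟩
  exact hIter_mem e hA n hz

lemma orbCl_eq_of_minimal (e : Z ≃ₜ Z) {K : Set Z} (hK : IsMinimalSubset e K) {z : Z}
    (hz : z ∈ K) : orbCl e z = K :=
  hK.2.2.2 _ isClosed_closure ⟨z, subset_closure (mem_orb_self e z)⟩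
    (orbCl_subset e hK.1 hK.2.2.1 hz) (image_orbCl_s16 e z)

lemma hIter_comm_self (e : Z ≃ₜ Z) (k : ℤ) (z : Z) :
    e (hIter e k z) = hIter e k (e z) := by
  have h1 : e (hIter e k z) = hIter e (1 + k) z := by
    rw [hIter_add_apply, hIter_one]
  have h2 : hIter e k (e z) = hIter e (k + 1) z := by
    rw [← hIter_one e z, ← hIter_add_apply]
  rw [h1, h2, add_comm]

def hIterHomeo (e : Z ≃ₜ Z) (k : ℤ) : Z ≃ₜ Z where
  toEquiv := e.toEquiv ^ k
  continuous_toFun := hIter_continuous e k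
  continuous_invFun := by
    have h : ((e.toEquiv ^ k)⁻¹ : Equiv.Perm Z) = e.toEquiv ^ (-k) := (zpow_neg _ _).symm
    show Continuous ⇑((e.toEquiv ^ k)⁻¹)
    rw [h]
    exact hIter_continuous e (-k)

lemma hIterHomeo_coe (e : Z ≃ₜ Z) (k : ℤ) : ⇑(hIterHomeo e k) = hIter e k := rfl

end Aux

section MetricAux

variable {Z : Type*} [MetricSpace Z] [CompactSpace Z]

lemma exists_minimal_subset (e : Z ≃ₜ Z) {C : Set Z} (hC : IsClosed C) (hne : C.Nonempty)
    (hinv : ⇑e '' C = C) : ∃ K, K ⊆ C ∧ IsMinimalSubset e K := by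
  set S : Set (Set Z) := {A | A ⊆ C ∧ IsClosed A ∧ A.Nonempty ∧ ⇑e '' A = A} with hSdef
  have hzorn := zorn_superset_nonempty S ?_ C ⟨Subset.rfl, hC, hne, hinv⟩
  · obtain ⟨K, hKC, hKP, hKmin⟩ := hzorn
    refine ⟨K, hKP.1, hKP.2.1, hKP.2.2.1, hKP.2.2.2, ?_⟩
    intro B hBcl hBne hBK hBinv
    have hBS : B ∈ S := ⟨hBK.trans hKP.1, hBcl, hBne, hBinv⟩
    exact Subset.antisymm hBK (hKmin hBS hBK)
  · intro c hcS hchain hcne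
    refine ⟨⋂₀ c, ⟨?_, ?_, ?_, ?_⟩, fun s hs => sInter_subset_of_mem hs⟩
    · obtain ⟨A, hA⟩ := hcne
      exact (sInter_subset_of_mem hA).trans (hcS hA).1
    · exact isClosed_sInter fun A hA => (hcS hA).2.1
    · haveI : Nonempty c := hcne.to_subtype
      apply IsCompact.nonempty_sInter_of_directed_nonempty_isCompact_isClosed
      · intro A hA B hB
        rcases hchain.total hA hB with h | h
        · exact ⟨A, hA, Subset.rfl, h⟩
        · exact ⟨B, hB, h, Subset.rfl⟩
      · exact fun U hU => (hcS hU).2.2.1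
      · exact fun U hU => (hcS hU).2.1.isCompact
      · exact fun U hU => (hcS hU).2.1
    · apply Subset.antisymm
      · rintro w ⟨u, hu, rfl⟩
        intro A hA
        have himg := (hcS hA).2.2.2
        exact himg ▸ mem_image_of_mem _ (hu A hA)
      · intro w hw
        have hsymm : ∀ A ∈ c, e.symm w ∈ A := by
          intro A hA
          have hwA : w ∈ ⇑e '' A := ((hcS hA).2.2.2).symm ▸ hw A hA
          obtain ⟨u, hu, hue⟩ := hwA
          have hu' : e.symm w = u := by rw [← hue]; simp
          rw [hu']; exact hu
        exact ⟨e.symm w, fun A hA => hsymm A hA, by simp⟩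

lemma isMinimalSubset_image (e φ : Z ≃ₜ Z) (hcomm : ∀ z, e (φ z) = φ (e z))
    {K : Set Z} (hK : IsMinimalSubset e K) : IsMinimalSubset e (⇑φ '' K) := by
  obtain ⟨hcl, hne, hinv, hmin⟩ := hK
  have hcomm' : ∀ z, e (φ.symm z) = φ.symm (e z) := by
    intro z
    apply φ.injective
    rw [← hcomm]
    simp
  have himg : ∀ (ψ : Z ≃ₜ Z), (∀ u, e (ψ u) = ψ (e u)) → ∀ (A : Set Z), ⇑e '' A = A →
      ⇑e '' (⇑ψ '' A) = ⇑ψ '' A := by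
    intro ψ hψ A hA
    calc ⇑e '' (⇑ψ '' A) = (⇑e ∘ ⇑ψ) '' A := (image_comp _ _ _).symm
      _ = (⇑ψ ∘ ⇑e) '' A := by rw [show ⇑e ∘ ⇑ψ = ⇑ψ ∘ ⇑e from funext hψ]
      _ = ⇑ψ '' (⇑e '' A) := image_comp _ _ _
      _ = ⇑ψ '' A := by rw [hA]
  refine ⟨(hcl.isCompact.image φ.continuous).isClosed, hne.image _, himg φ hcomm K hinv, ?_⟩
  intro B hBcl hBne hBsub hBinv
  have h1 : ⇑φ.symm '' B ⊆ K := by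
    rintro w ⟨b, hb, rfl⟩
    obtain ⟨u, hu, rfl⟩ := hBsub hb
    simpa using hu
  have h2 : ⇑e '' (⇑φ.symm '' B) = ⇑φ.symm '' B := himg φ.symm hcomm' B hBinv
  have h3 : ⇑φ.symm '' B = K :=
    hmin _ ((hBcl.isCompact.image φ.symm.continuous).isClosed) (hBne.image _) h1 h2
  calc B = ⇑φ '' (⇑φ.symm '' B) := by
        rw [← image_comp]; simp
    _ = ⇑φ '' K := by rw [h3]

lemma syndetic_return (e : Z ≃ₜ Z) {K : Set Z} (hK : IsMinimalSubset e K) {z : Z} (hz : z ∈ K)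
    {ε : ℝ} (hε : 0 < ε) :
    ∃ G : ℕ, ∀ k : ℤ, ∃ j : ℤ, j.natAbs ≤ G ∧ dist (hIter e (j + k) z) z < ε := by
  have hcover : K ⊆ ⋃ n : ℤ, (hIter e n) ⁻¹' (Metric.ball z ε) := by
    intro w hw
    have hzw : z ∈ orbCl e w := by
      rw [orbCl_eq_of_minimal e hK hw]; exact hz
    obtain ⟨b, hb, hdist⟩ := Metric.mem_closure_iff.mp hzw ε hε
    obtain ⟨n, rfl⟩ := hb
    exact mem_iUnion.2 ⟨n, by simpa [Metric.mem_ball, dist_comm] using hdist⟩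
  obtain ⟨t, ht⟩ := (hK.1.isCompact).elim_finite_subcover _
    (fun n : ℤ => (Metric.isOpen_ball).preimage (hIter_continuous e n)) hcover
  refine ⟨t.sup Int.natAbs, fun k => ?_⟩
  have hkz : hIter e k z ∈ K := hIter_mem e hK.2.2.1 k hz
  have hmem := ht hkz
  simp only [mem_iUnion, exists_prop] at hmem
  obtain ⟨n, hnt, hn⟩ := hmem
  refine ⟨n, Finset.le_sup hnt, ?_⟩
  rw [hIter_add_apply]
  simpa [Metric.mem_ball] using hn

lemma uniform_iter (e : Z ≃ₜ Z) (G : ℕ) {ε : ℝ} (hε : 0 < ε) :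
    ∃ δ, 0 < δ ∧ ∀ u v : Z, dist u v < δ → ∀ j : ℤ, j.natAbs ≤ G →
      dist (hIter e j u) (hIter e j v) < ε := by
  have huc : ∀ j : ℤ, ∃ δ, 0 < δ ∧ ∀ u v : Z, dist u v < δ →
      dist (hIter e j u) (hIter e j v) < ε := by
    intro j
    have h := CompactSpace.uniformContinuous_of_continuous (hIter_continuous e j)
    obtain ⟨δ, hδ, hd⟩ := Metric.uniformContinuous_iff.mp h ε hε
    exact ⟨δ, hδ, fun u v huv => hd huv⟩
  choose δf hδf hδf' using huc
  have hFne : (Finset.Icc (-(G : ℤ)) (G : ℤ)).Nonempty := ⟨0, by simp⟩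
  refine ⟨(Finset.Icc (-(G : ℤ)) (G : ℤ)).inf' hFne δf, ?_, ?_⟩
  · rw [Finset.lt_inf'_iff]
    exact fun j _ => hδf j
  · intro u v huv j hj
    have hjF : j ∈ Finset.Icc (-(G : ℤ)) (G : ℤ) := by
      rw [Finset.mem_Icc]
      omega
    exact hδf' j u v (lt_of_lt_of_le huv (Finset.inf'_le _ hjF))

end MetricAux

section ProdAux

variable {X : Type*} {Y : Type*} [TopologicalSpace X] [TopologicalSpace Y]

lemma prod_map_iterate (f : X → X) (g : Y → Y) (k : ℕ) (p : X × Y) :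
    (Prod.map f g)^[k] p = (f^[k] p.1, g^[k] p.2) := by
  induction k generalizing p with
  | zero => simp
  | succ k ih =>
    rw [Function.iterate_succ_apply, Function.iterate_succ_apply,
      Function.iterate_succ_apply, ih]
    simp [Prod.map]

lemma hIter_prod (T : X ≃ₜ X) (S : Y ≃ₜ Y) (n : ℤ) (p : X × Y) :
    hIter (T.prodCongr S) n p = (hIter T n p.1, hIter S n p.2) := by
  cases n with
  | ofNat k =>
    rw [show Int.ofNat k = (k : ℤ) from rfl, hIter_natCast, hIter_natCast, hIter_natCast,
      Homeomorph.coe_prodCongr, prod_map_iterate]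
  | negSucc k =>
    rw [hIter_negSucc, hIter_negSucc, hIter_negSucc, Homeomorph.prodCongr_symm,
      Homeomorph.coe_prodCongr, prod_map_iterate]

end ProdAux

/-- Let (X,T) be a transitive system with minimal subsets Mᵢ (i ∈ ℕ) whose union is
dense, such that every transitive point is proximal to every point of ⋃ᵢ Mᵢ. Then
(X,T) is disjoint from every minimal system. -/
theorem stmt_16 {X : Type u} [MetricSpace X] [CompactSpace X] (T : X ≃ₜ X)
    (htrans : ∃ x : X, Dense (orb T x))
    (M : ℕ → Set X) (hmin : ∀ i, IsMinimalSubset T (M i))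
    (hdense : Dense (⋃ i, M i))
    (hprox : ∀ x : X, Dense (orb T x) → ∀ y ∈ ⋃ i, M i,
      ∀ ε > (0 : ℝ), ∃ n : ℤ, dist (hIter T n x) (hIter T n y) < ε) :
    ∀ (Y : Type u) [MetricSpace Y] [CompactSpace Y] (S : Y ≃ₜ Y),
      IsMinimalSys (⇑S) → DisjointOn (⇑T) (⇑S) Set.univ Set.univ := by
  intro Y _ _ S hYmin J hJ
  obtain ⟨hJcl, -, hJinv, hJfst, hJsnd⟩ := hJ
  rw [Set.univ_prod_univ]
  apply Set.eq_univ_of_forall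
  intro p
  obtain ⟨x, hx⟩ := htrans
  have hxJ : x ∈ Prod.fst '' J := by rw [hJfst]; trivial
  obtain ⟨q, hqJ, hq1⟩ := hxJ
  set TS := T.prodCongr S with hTSdef
  have hJinv' : ⇑TS '' J = J := by rw [Homeomorph.coe_prodCongr]; exact hJinv
  -- the second projection of any minimal subset of X × Y is all of Y
  have hsndUniv : ∀ K : Set (X × Y), IsMinimalSubset TS K → Prod.snd '' K = univ := by
    intro K hK
    apply hYmin
    · exact (hK.1.isCompact.image continuous_snd).isClosed
    · exact hK.2.1.image _
    · calc ⇑S '' (Prod.snd '' K) = (⇑S ∘ Prod.snd) '' K := (image_comp _ _ _).symm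
        _ = (Prod.snd ∘ ⇑TS) '' K := by
            rw [show ⇑S ∘ Prod.snd = Prod.snd ∘ ⇑TS by
              funext z; simp [hTSdef, Homeomorph.coe_prodCongr]]
        _ = Prod.snd '' (⇑TS '' K) := image_comp _ _ _
        _ = Prod.snd '' K := by rw [hK.2.2.1]
  -- key step: every minimal subset of (M i) × Y is contained in J
  have keyK : ∀ (i : ℕ) (K : Set (X × Y)), IsMinimalSubset TS K →
      K ⊆ (M i) ×ˢ (univ : Set Y) → K ⊆ J := by
    intro i K hK hKsub
    have hq2 : q.2 ∈ Prod.snd '' K := by rw [hsndUniv K hK]; trivial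
    obtain ⟨z, hzK, hz2⟩ := hq2
    have hzMi : z.1 ∈ M i := (hKsub hzK).1
    -- (x, q.2) approaches z along a suitable sequence of times
    have hdagger : ∀ ε > (0 : ℝ), ∃ n : ℤ, dist (hIter TS n (x, q.2)) z < ε := by
      intro ε hε
      obtain ⟨G, hG⟩ := syndetic_return TS hK hzK (half_pos hε)
      obtain ⟨δ, hδpos, hδ⟩ := uniform_iter T G (half_pos hε)
      obtain ⟨n₀, hn₀⟩ := hprox x hx z.1 (mem_iUnion.2 ⟨i, hzMi⟩) δ hδpos
      obtain ⟨j, hjG, hj⟩ := hG n₀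
      refine ⟨j + n₀, ?_⟩
      rw [hIter_prod, Prod.dist_eq] at hj ⊢
      have hj1 : dist (hIter T (j + n₀) z.1) z.1 < ε / 2 :=
        lt_of_le_of_lt (le_max_left _ _) hj
      have hj2 : dist (hIter S (j + n₀) z.2) z.2 < ε / 2 :=
        lt_of_le_of_lt (le_max_right _ _) hj
      have hx1 : dist (hIter T (j + n₀) x) (hIter T (j + n₀) z.1) < ε / 2 := by
        rw [hIter_add_apply, hIter_add_apply]
        exact hδ _ _ hn₀ j hjG
      apply max_lt
      · calc dist (hIter T (j + n₀) (x, q.2).1) z.1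
            ≤ dist (hIter T (j + n₀) x) (hIter T (j + n₀) z.1)
              + dist (hIter T (j + n₀) z.1) z.1 := dist_triangle _ _ _
          _ < ε / 2 + ε / 2 := add_lt_add hx1 hj1
          _ = ε := add_halves ε
      · have h2 : dist (hIter S (j + n₀) q.2) z.2 < ε / 2 := by
          rw [← hz2]; exact hj2
        exact lt_trans h2 (half_lt_self hε)
    have hxyJ : (x, q.2) ∈ J := by
      rw [← hq1]
      simpa using hqJ
    have horbJ : orb TS (x, q.2) ⊆ J := by
      rintro b ⟨n, rfl⟩
      exact hIter_mem TS hJinv' n hxyJ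
    have hzJ : z ∈ J := by
      have hzcl : z ∈ closure (orb TS (x, q.2)) := by
        rw [Metric.mem_closure_iff]
        intro ε hε
        obtain ⟨n, hn⟩ := hdagger ε hε
        exact ⟨hIter TS n (x, q.2), ⟨n, rfl⟩, by rwa [dist_comm]⟩
      exact (hJcl.closure_subset_iff.mpr horbJ) hzcl
    have horbz : orbCl TS z = K := orbCl_eq_of_minimal TS hK hzK
    rw [← horbz]
    apply hJcl.closure_subset_iff.mpr
    rintro b ⟨n, rfl⟩
    exact hIter_mem TS hJinv' n hzJ
  -- every point with first coordinate in some M i belongs to J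
  have hMJ : ∀ (i : ℕ) (r : X × Y), r.1 ∈ M i → r ∈ J := by
    intro i r hr
    obtain ⟨hMcl, hMne, hMinv, hMmin⟩ := hmin i
    have hCcl : IsClosed ((M i) ×ˢ (univ : Set Y)) := hMcl.prod isClosed_univ
    have hCne : ((M i) ×ˢ (univ : Set Y)).Nonempty := hMne.prod ⟨p.2, trivial⟩
    have hCinv : ⇑TS '' ((M i) ×ˢ (univ : Set Y)) = (M i) ×ˢ (univ : Set Y) := by
      ext w
      constructor
      · rintro ⟨u, ⟨hu1, -⟩, rfl⟩
        refine ⟨?_, trivial⟩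
        show (TS u).1 ∈ M i
        have : (TS u).1 = T u.1 := by simp [hTSdef, Homeomorph.coe_prodCongr]
        rw [this]
        exact hMinv ▸ mem_image_of_mem _ hu1
      · rintro ⟨hw1, -⟩
        rw [← hMinv] at hw1
        obtain ⟨u, hu, hu1⟩ := hw1
        refine ⟨(u, S.symm w.2), ⟨hu, trivial⟩, ?_⟩
        have : TS (u, S.symm w.2) = (T u, S (S.symm w.2)) := by
          simp [hTSdef, Homeomorph.coe_prodCongr]
        rw [this]
        apply Prod.ext
        · simpa using hu1
        · simp
    obtain ⟨K₀, hK₀C, hK₀⟩ := exists_minimal_subset TS hCcl hCne hCinv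
    obtain ⟨w, hwK₀, hw2⟩ : ∃ w ∈ K₀, w.2 = r.2 := by
      have hmem : r.2 ∈ Prod.snd '' K₀ := by rw [hsndUniv K₀ hK₀]; trivial
      obtain ⟨w, hw, hw2⟩ := hmem
      exact ⟨w, hw, hw2⟩
    have hwMi : w.1 ∈ M i := (hK₀C hwK₀).1
    have horb : orbCl T w.1 = M i := orbCl_eq_of_minimal T (hmin i) hwMi
    have hrcl : r ∈ closure J := by
      rw [Metric.mem_closure_iff]
      intro ε hε
      have hr1 : r.1 ∈ orbCl T w.1 := by rw [horb]; exact hr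
      obtain ⟨b, hb, hbd⟩ := Metric.mem_closure_iff.mp hr1 ε hε
      obtain ⟨k, rfl⟩ := hb
      set φ : (X × Y) ≃ₜ (X × Y) := (hIterHomeo T k).prodCongr (Homeomorph.refl Y) with hφdef
      have hφcoe : ∀ z : X × Y, φ z = (hIter T k z.1, z.2) := by
        intro z
        simp [hφdef, Homeomorph.coe_prodCongr, hIterHomeo_coe, Prod.map]
      have hφcomm : ∀ z : X × Y, TS (φ z) = φ (TS z) := by
        intro z
        have hTs : ∀ u : X × Y, TS u = (T u.1, S u.2) := by
          intro u; simp [hTSdef, Homeomorph.coe_prodCongr, Prod.map]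
        rw [hφcoe, hTs, hφcoe, hTs]
        exact Prod.ext (hIter_comm_self T k z.1) rfl
      have hφK : IsMinimalSubset TS (⇑φ '' K₀) := isMinimalSubset_image TS φ hφcomm hK₀
      have hφsub : ⇑φ '' K₀ ⊆ (M i) ×ˢ (univ : Set Y) := by
        rintro b ⟨u, hu, rfl⟩
        rw [hφcoe]
        exact ⟨hIter_mem T hMinv k (hK₀C hu).1, trivial⟩
      have hφJ : ⇑φ '' K₀ ⊆ J := keyK i _ hφK hφsub
      refine ⟨φ w, hφJ (mem_image_of_mem _ hwK₀), ?_⟩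
      rw [hφcoe, Prod.dist_eq]
      apply max_lt
      · exact hbd
      · rw [hw2]
        simpa using hε
    exact hJcl.closure_eq ▸ hrcl
  -- conclude by density
  have hpcl : p ∈ closure J := by
    rw [Metric.mem_closure_iff]
    intro ε hε
    obtain ⟨b, hb, hbd⟩ := Metric.mem_closure_iff.mp (hdense p.1) ε hε
    obtain ⟨i, hbi⟩ := mem_iUnion.mp hb
    refine ⟨(b, p.2), hMJ i (b, p.2) hbi, ?_⟩
    rw [Prod.dist_eq]
    apply max_lt
    · exact hbd
    · simpa using hε
  exact hJcl.closure_eq ▸ hpcl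
end
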